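/- arXiv:2505.02614 — 2 statements merged into one kernel-verified Lean document; each statement's English description precedes it below -/
import Mathlib

section
/- Let n ≥ 2 be an integer and let w > 0 satisfy w·e^w = (n−1)/e. Then for every t ∈ [1/n, 1), one has (1−t)·log( t(n−1)/(1−t) ) ≤ w, and equality holds at t = 1/(1+w). -/
/-!
Write `n - 1 = w e^(w+1)`. For `t ∈ (0, 1)` put `u = t w / (1 - t)`; then
`log (t (n - 1) / (1 - t)) = w + 1 + log u ≤ w + u`, and `(1 - t) (w + u) = w`.
Equality holds exactly when `u = 1`, i.e. `t = 1 / (1 + w)`.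
-/

open Real

lemma eq_mul_exp_add_one_of_mul_exp_eq_div {w x : ℝ} (h : w * exp w = x / exp 1) :
    x = w * exp (w + 1) := by
  rw [exp_add, ← mul_assoc, h, div_mul_cancel₀ x (exp_pos 1).ne']

lemma one_sub_mul_log_mul_exp_le {w t : ℝ} (hw : 0 < w) (ht₀ : 0 < t) (ht₁ : t < 1) :
    (1 - t) * log (t * (w * exp (w + 1)) / (1 - t)) ≤ w := by
  have h1t : 0 < 1 - t := sub_pos.mpr ht₁
  set u := t * w / (1 - t) with hu
  have hu_pos : 0 < u := by positivity
  have hlog : log (t * (w * exp (w + 1)) / (1 - t)) = w + 1 + log u := by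
    rw [show t * (w * exp (w + 1)) / (1 - t) = exp (w + 1) * u by rw [hu]; ring,
      log_mul (exp_pos _).ne' hu_pos.ne', log_exp]
  have hmul : (1 - t) * u = t * w := by rw [hu]; field_simp
  calc (1 - t) * log (t * (w * exp (w + 1)) / (1 - t))
      = (1 - t) * (w + 1 + log u) := by rw [hlog]
    _ ≤ (1 - t) * (w + 1 + (u - 1)) := by
        gcongr
        exact log_le_sub_one_of_pos hu_pos
    _ = w := by linear_combination hmul

lemma one_sub_mul_log_mul_exp_eq {w : ℝ} (hw : 0 < w) :
    (1 - 1 / (1 + w)) * log (1 / (1 + w) * (w * exp (w + 1)) / (1 - 1 / (1 + w))) = w := by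
  have h1w : 1 + w ≠ 0 := by positivity
  have hsub : 1 - 1 / (1 + w) = w / (1 + w) := by field_simp; ring
  rw [hsub, show 1 / (1 + w) * (w * exp (w + 1)) / (w / (1 + w)) = exp (w + 1) by
    field_simp, log_exp]
  field_simp
  ring

theorem lambert_bound_general (n : ℕ) (w : ℝ) (hw : 0 < w)
    (hweq : w * Real.exp w = ((n : ℝ) - 1) / Real.exp 1) :
    (∀ t ∈ Set.Ico (1 / (n : ℝ)) 1,
      (1 - t) * Real.log (t * ((n : ℝ) - 1) / (1 - t)) ≤ w) ∧
    (1 - 1 / (1 + w)) *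
      Real.log ((1 / (1 + w)) * ((n : ℝ) - 1) / (1 - 1 / (1 + w))) = w := by
  have hn := eq_mul_exp_add_one_of_mul_exp_eq_div hweq
  have hn_pos : (0 : ℝ) < n := by
    have : 0 < w * exp (w + 1) := by positivity
    linarith
  rw [hn]
  exact ⟨fun t ⟨ht₀, ht₁⟩ =>
      one_sub_mul_log_mul_exp_le hw ((one_div_pos.mpr hn_pos).trans_le ht₀) ht₁,
    one_sub_mul_log_mul_exp_eq hw⟩

/-- Let `n ≥ 2` and let `w > 0` satisfy `w e^w = (n-1)/e` (i.e.
`w = W₀((n-1)/e)`). Then for every `t ∈ [1/n, 1)` one has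
`(1-t) log(t(n-1)/(1-t)) ≤ w`, with equality at `t = 1/(1+w)`. -/
theorem lambert_bound (n : ℕ) (hn : 2 ≤ n) (w : ℝ) (hw : 0 < w)
    (hweq : w * Real.exp w = ((n : ℝ) - 1) / Real.exp 1) :
    (∀ t ∈ Set.Ico (1 / (n : ℝ)) 1,
      (1 - t) * Real.log (t * ((n : ℝ) - 1) / (1 - t)) ≤ w) ∧
    (1 - 1 / (1 + w)) *
      Real.log ((1 / (1 + w)) * ((n : ℝ) - 1) / (1 - 1 / (1 + w))) = w :=
  lambert_bound_general n w hw hweq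
end

section
/- (Slow-rate implicit-bias bound) Let A ∈ ℝ^{m×n}, b ∈ ℝ^m, n ≥ 2, η ∈ ℝ, and x₀ = e^{−η}·1 ∈ ℝ^n. Let z ∈ S₊ be an ℓ₁-minimal solution, i.e. ‖z‖₁ ≤ ‖s‖₁ for all s ∈ S₊, with ‖x₀‖₁ = n·e^{−η} < ‖z‖₁. Let x ∈ ℝ^n_{++} ∩ S₊ satisfy ⟨log x + η·1, z′ − x⟩ = 0 for all z′ ∈ S₊. Then ‖x‖₁ − ‖z‖₁ ≤ ‖z‖₁ · log n / ( η + log(‖z‖₁/n) ). -/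
open Finset Filter

/-- Bregman divergence generated by the negative entropy
`h(x) = ∑ i, x i * (log (x i) - 1)` (with the convention `0 * log 0 = 0`,
which holds automatically since `Real.log 0 = 0`). -/
noncomputable def Dh {n : ℕ} (x y : Fin n → ℝ) : ℝ :=
  ∑ i, (x i * Real.log (x i / y i) - x i + y i)

noncomputable def l1 {n : ℕ} (x : Fin n → ℝ) : ℝ := ∑ i, |x i|

/-!
Pairing the optimality condition of `x` with `z` gives
`∑ z log x = ∑ x log x + η (‖x‖₁ - ‖z‖₁)`, so Gibbs' inequality `∑ z log (z / x) ≥ ‖z‖₁ - ‖x‖₁`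
yields `η (‖x‖₁ - ‖z‖₁) ≤ ∑ z log z - ∑ x log x + ‖x‖₁ - ‖z‖₁`. The entropy of a vector of
mass `S` in dimension `n` lies between `S log (S / n)` and `S log S`, and
`‖x‖₁ log (‖x‖₁ / ‖z‖₁) ≥ ‖x‖₁ - ‖z‖₁`; together these leave an inequality that is linear in
`‖x‖₁ - ‖z‖₁`.
-/

open Real

lemma sub_le_mul_log_sub_mul_log {a c : ℝ} (ha : 0 ≤ a) (hc : 0 < c) :
    a - c ≤ a * log a - a * log c := by
  rcases ha.eq_or_lt with rfl | ha
  · simpa using hc.le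
  · have h := mul_le_mul_of_nonneg_left (log_le_sub_one_of_pos (div_pos hc ha)) ha.le
    rw [log_div hc.ne' ha.ne', mul_sub_one, mul_div_cancel₀ _ ha.ne'] at h
    linarith

section Entropy

variable {ι : Type*} [Fintype ι] {p q : ι → ℝ}

theorem sum_sub_sum_le_sum_mul_log_sub_sum_mul_log (hp : ∀ i, 0 ≤ p i) (hq : ∀ i, 0 < q i) :
    ∑ i, p i - ∑ i, q i ≤ ∑ i, p i * log (p i) - ∑ i, p i * log (q i) := by
  simpa only [sum_sub_distrib] using
    sum_le_sum fun i _ => sub_le_mul_log_sub_mul_log (hp i) (hq i)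

theorem sum_mul_log_le_sum_mul_log_sum (hp : ∀ i, 0 ≤ p i) :
    ∑ i, p i * log (p i) ≤ (∑ i, p i) * log (∑ i, p i) := by
  rw [sum_mul]
  refine sum_le_sum fun i _ => ?_
  rcases (hp i).eq_or_lt with h | h
  · simp [← h]
  · exact mul_le_mul_of_nonneg_left
      (log_le_log h (single_le_sum (fun j _ => hp j) (mem_univ i))) h.le

theorem sum_mul_log_sub_sum_mul_log_card_le [Nonempty ι] (hp : ∀ i, 0 < p i) :
    (∑ i, p i) * log (∑ i, p i) - (∑ i, p i) * log (Fintype.card ι) ≤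
      ∑ i, p i * log (p i) := by
  set S := ∑ i, p i
  have hS : 0 < S := sum_pos (fun i _ => hp i) univ_nonempty
  have hcard : (0 : ℝ) < Fintype.card ι := Nat.cast_pos.2 Fintype.card_pos
  have h := sum_sub_sum_le_sum_mul_log_sub_sum_mul_log (fun i => (hp i).le)
    (fun _ => div_pos hS hcard)
  rw [← sum_mul, sum_const, card_univ, nsmul_eq_mul, mul_div_cancel₀ _ hcard.ne',
    log_div hS.ne' hcard.ne'] at h
  linarith

end Entropy

lemma l1_eq_sum_of_nonneg {n : ℕ} {x : Fin n → ℝ} (hx : ∀ i, 0 ≤ x i) : l1 x = ∑ i, x i :=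
  sum_congr rfl fun i _ => abs_of_nonneg (hx i)

theorem slow_rate_implicit_bias_bound_general {m n : ℕ}
    (A : Matrix (Fin m) (Fin n) ℝ) (b : Fin m → ℝ) (η : ℝ)
    (z : Fin n → ℝ) (hz : ∀ i, 0 ≤ z i) (hzsol : A.mulVec z = b)
    (hsmall : (n : ℝ) * Real.exp (-η) < l1 z)
    (x : Fin n → ℝ) (hx : ∀ i, 0 < x i)
    (horth : ∀ z' : Fin n → ℝ, (∀ i, 0 ≤ z' i) → A.mulVec z' = b →
      ∑ i, (Real.log (x i) + η) * (z' i - x i) = 0) :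
    l1 x - l1 z ≤ l1 z * Real.log n / (η + Real.log (l1 z / n)) := by
  have hn : (0 : ℝ) < n := Nat.cast_pos.2 <| Nat.pos_of_ne_zero <| by
    rintro rfl
    simp [l1] at hsmall
  have : Nonempty (Fin n) := Fin.pos_iff_nonempty.1 (Nat.cast_pos.1 hn)
  rw [l1_eq_sum_of_nonneg hz] at hsmall ⊢
  rw [l1_eq_sum_of_nonneg fun i => (hx i).le]
  have hL : 0 < ∑ i, z i := lt_of_le_of_lt (by positivity) hsmall
  have hden : 0 < η + log ((∑ i, z i) / n) := by
    have : -η < log ((∑ i, z i) / n) :=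
      (lt_log_iff_exp_lt (div_pos hL hn)).2 ((lt_div_iff₀' hn).2 hsmall)
    linarith
  have hpair : ∑ i, z i * log (x i) - ∑ i, x i * log (x i) + η * (∑ i, z i - ∑ i, x i) = 0 := by
    rw [← horth z hz hzsol]
    simp only [add_mul, mul_sub, sum_add_distrib, sum_sub_distrib, ← mul_sum, mul_comm (log _)]
    ring
  have hgibbs := sum_sub_sum_le_sum_mul_log_sub_sum_mul_log hz hx
  have hz_ent := sum_mul_log_le_sum_mul_log_sum hz
  have hx_ent := sum_mul_log_sub_sum_mul_log_card_le hx
  have hmass := sub_le_mul_log_sub_mul_log (sum_pos (fun i _ => hx i) univ_nonempty).le hL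
  rw [Fintype.card_fin] at hx_ent
  rw [le_div_iff₀ hden, log_div hL.ne' hn.ne']
  linarith

/-- Slow-rate implicit-bias bound: let `n ≥ 2`, `x₀ = e^{-η} 𝟏`, let `z ∈ S₊`
be ℓ₁-minimal with `‖x₀‖₁ = n e^{-η} < ‖z‖₁`, and let `x ∈ ℝⁿ₊₊ ∩ S₊` satisfy
`⟨log x + η 𝟏, z' - x⟩ = 0` for all `z' ∈ S₊`. Then
`‖x‖₁ - ‖z‖₁ ≤ ‖z‖₁ log n / (η + log(‖z‖₁/n))`. -/
theorem slow_rate_implicit_bias_bound {m n : ℕ} (hn : 2 ≤ n)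
    (A : Matrix (Fin m) (Fin n) ℝ) (b : Fin m → ℝ) (η : ℝ)
    (z : Fin n → ℝ) (hz : ∀ i, 0 ≤ z i) (hzsol : A.mulVec z = b)
    (hzmin : ∀ s : Fin n → ℝ, (∀ i, 0 ≤ s i) → A.mulVec s = b → l1 z ≤ l1 s)
    (hsmall : (n : ℝ) * Real.exp (-η) < l1 z)
    (x : Fin n → ℝ) (hx : ∀ i, 0 < x i) (hxsol : A.mulVec x = b)
    (horth : ∀ z' : Fin n → ℝ, (∀ i, 0 ≤ z' i) → A.mulVec z' = b →
      ∑ i, (Real.log (x i) + η) * (z' i - x i) = 0) :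
    l1 x - l1 z ≤ l1 z * Real.log n / (η + Real.log (l1 z / n)) :=
  slow_rate_implicit_bias_bound_general A b η z hz hzsol hsmall x hx horth
end
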